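/- arXiv:0710.3013 — 11 statements merged into one kernel-verified Lean document; each statement's English description precedes it below -/
import Mathlib

section
/- Let F be a finite field with q elements, q odd, and suppose q ≡ 1 (mod 4). Let Q be the set of nonzero squares in F and Q̄ the set of nonzero non-squares. Then for every x ∈ Q, the set Q̄ ∩ (Q̄ − x) = {y ∈ Q̄ : y + x ∈ Q̄} has exactly (q − 1)/4 elements. -/
open Finset

theorem stmt_0 (F : Type*) [Field F] [Fintype F] (q : ℕ)
    (hq : Fintype.card F = q) (hodd : Odd q) (h4 : q % 4 = 1)
    (Q Qbar : Set F)
    (hQ : Q = {x : F | x ≠ 0 ∧ ∃ y : F, y ≠ 0 ∧ x = y ^ 2})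
    (hQbar : Qbar = {x : F | x ≠ 0 ∧ x ∉ Q})
    (x : F) (hx : x ∈ Q) :
    ({y : F | y ∈ Qbar ∧ y + x ∈ Qbar}).ncard = (q - 1) / 4 := by
  classical
  subst hq hQ hQbar
  set χ := quadraticChar F with hχ
  have hchar : ringChar F ≠ 2 := by
    intro h
    have := FiniteField.even_card_of_char_two h
    rw [Nat.odd_iff] at hodd
    omega
  -- membership in Qbar is χ = -1
  have hmem : ∀ y : F,
      (y ∈ {x : F | x ≠ 0 ∧ x ∉ {x : F | x ≠ 0 ∧ ∃ y : F, y ≠ 0 ∧ x = y ^ 2}}) ↔ χ y = -1 := by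
    intro y
    simp only [Set.mem_setOf_eq, not_and, not_exists]
    rw [hχ, quadraticChar_neg_one_iff_not_isSquare]
    constructor
    · rintro ⟨hy0, hny⟩ ⟨z, hz⟩
      have hz0 : z ≠ 0 := by rintro rfl; simp at hz; exact hy0 hz
      exact (hny hy0 z hz0) (by rw [hz, sq])
    · intro hns
      have hy0 : y ≠ 0 := by rintro rfl; exact hns ⟨0, by simp⟩
      exact ⟨hy0, fun _ z hz hy => hns ⟨z, by rw [hy, sq]⟩⟩
  obtain ⟨hx0, z, hz0, hxz⟩ := hx
  have hχx : χ x = 1 := by rw [hxz, hχ]; exact quadraticChar_sq_one' hz0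
  -- the set as a Finset
  set S : Finset F := univ.filter (fun y => χ y = -1 ∧ χ (y + x) = -1) with hS
  have hncard : ({y : F | y ∈ {x : F | x ≠ 0 ∧ x ∉ {x : F | x ≠ 0 ∧ ∃ y : F, y ≠ 0 ∧ x = y ^ 2}} ∧
      y + x ∈ {x : F | x ≠ 0 ∧ x ∉ {x : F | x ≠ 0 ∧ ∃ y : F, y ≠ 0 ∧ x = y ^ 2}}}).ncard
      = S.card := by
    rw [← Set.ncard_coe_finset]
    congr 1
    ext y
    simp only [Set.mem_setOf_eq, hS, coe_filter, mem_univ, true_and]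
    rw [← hmem y, ← hmem (y + x)]
    rfl
  rw [hncard]
  -- basic values of χ
  have hχ0 : χ (0 : F) = 0 := quadraticChar_zero
  have hχ1 : χ (1 : F) = 1 := by
    rw [hχ, show (1 : F) = 1 ^ 2 by ring]; exact quadraticChar_sq_one' one_ne_zero
  have hχneg1 : χ (-1 : F) = 1 := by
    rw [hχ, (quadraticChar_one_iff_isSquare (by
      intro h
      exact one_ne_zero (neg_eq_zero.mp h)))]
    exact FiniteField.isSquare_neg_one_iff.mpr (by omega)
  have hχnegx : χ (-x) = 1 := by
    rw [show -x = -1 * x by ring, map_mul, hχneg1, hχx, one_mul]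
  have hsum0 : ∑ y : F, χ y = 0 := quadraticChar_sum_zero hchar
  have hdich : ∀ y : F, y ≠ 0 → χ y = 1 ∨ χ y = -1 := fun y hy =>
    quadraticChar_dichotomy hy
  -- The big set T
  set T : Finset F := univ \ {0, -x} with hT
  have hsubT : ({0, -x} : Finset F) ⊆ univ := subset_univ _
  have h0negx : (0 : F) ≠ -x := by
    intro h; exact hx0 (by rw [← neg_eq_zero, ← h])
  have hpair : ∀ f : F → ℤ, ∑ y ∈ ({0, -x} : Finset F), f y = f 0 + f (-x) :=
    fun f => Finset.sum_pair h0negx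
  have hcardF : 2 ≤ Fintype.card F := Fintype.one_lt_card
  -- cardinality of T
  have hTcard : (T.card : ℤ) = (Fintype.card F : ℤ) - 2 := by
    rw [hT, Finset.card_sdiff_of_subset hsubT, Finset.card_univ, card_pair h0negx]
    omega
  -- sum of χ y over T
  have hsum1 : ∑ y ∈ T, χ y = -1 := by
    rw [hT, Finset.sum_sdiff_eq_sub hsubT, hsum0, hpair, hχ0, hχnegx]
    ring
  -- sum of χ (y+x) over T
  have hshift : ∑ y : F, χ (y + x) = 0 := by
    rw [← hsum0]
    exact Fintype.sum_equiv (Equiv.addRight x) _ _ (fun y => rfl)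
  have hsum2 : ∑ y ∈ T, χ (y + x) = -1 := by
    rw [hT, Finset.sum_sdiff_eq_sub hsubT, hshift, hpair]
    simp only [zero_add, neg_add_cancel, hχx, hχ0]
    ring
  -- sum of χ y * χ (y+x) over T
  have hsum3 : ∑ y ∈ T, χ y * χ (y + x) = -1 := by
    have step1 : ∑ y ∈ T, χ y * χ (y + x) = ∑ y ∈ univ \ {(0 : F)}, χ y * χ (y + x) := by
      have hT' : T = (univ \ {(0 : F)}) \ {-x} := by
        rw [hT, sdiff_sdiff]; congr 1
      rw [hT', Finset.sum_sdiff_eq_sub (by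
        intro y hy
        simp only [Finset.mem_singleton] at hy
        subst hy
        simp only [Finset.mem_sdiff, mem_univ, Finset.mem_singleton, true_and]
        intro h; exact hx0 (by rw [← neg_eq_zero, ← h]))]
      simp [hχ0]
    have step2 : ∀ y ∈ univ \ {(0 : F)}, χ y * χ (y + x) = χ (1 + x * y⁻¹) := by
      intro y hy
      simp only [Finset.mem_sdiff, Finset.mem_singleton, mem_univ, true_and] at hy
      rw [← map_mul]
      have : y * (y + x) = y ^ 2 * (1 + x * y⁻¹) := by field_simp
      rw [this, map_mul, hχ, quadraticChar_sq_one' hy, one_mul]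
    rw [step1, Finset.sum_congr rfl step2]
    have step3 : ∑ y ∈ univ \ {(0 : F)}, χ (1 + x * y⁻¹) = ∑ w ∈ univ \ {(1 : F)}, χ w := by
      apply Finset.sum_nbij' (fun y => 1 + x * y⁻¹) (fun w => x * (w - 1)⁻¹)
      · intro y hy
        simp only [Finset.mem_sdiff, Finset.mem_singleton, mem_univ, true_and] at hy ⊢
        intro h
        have : x * y⁻¹ = 0 := by linear_combination h
        rcases mul_eq_zero.mp this with h' | h'
        · exact hx0 h'
        · exact hy (by simpa using inv_eq_zero.mp h')
      · intro w hw
        simp only [Finset.mem_sdiff, Finset.mem_singleton, mem_univ, true_and] at hw ⊢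
        intro h
        rcases mul_eq_zero.mp h with h' | h'
        · exact hx0 h'
        · exact hw (by have := inv_eq_zero.mp h'; linear_combination this)
      · intro y hy
        simp only [Finset.mem_sdiff, Finset.mem_singleton, mem_univ, true_and] at hy
        field_simp
        simp [hx0]
      · intro w hw
        simp only [Finset.mem_sdiff, Finset.mem_singleton, mem_univ, true_and] at hw
        have hw1 : w - 1 ≠ 0 := sub_ne_zero.mpr hw
        field_simp
        ring
      · intro y _; rfl
    rw [step3, Finset.sum_sdiff_eq_sub (subset_univ _), hsum0, Finset.sum_singleton, hχ1]
    ring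
  -- the main identity: sum over T of (1-χy)(1-χ(y+x)) = 4 * |S|
  have hfilter : T.filter (fun y => χ y = -1 ∧ χ (y + x) = -1) = S := by
    ext y
    simp only [hS, hT, Finset.mem_filter, Finset.mem_sdiff, mem_univ, true_and,
      Finset.mem_insert, Finset.mem_singleton]
    constructor
    · rintro ⟨_, h⟩; exact h
    · rintro ⟨h1, h2⟩
      refine ⟨fun h => ?_, h1, h2⟩
      rcases h with rfl | rfl
      · rw [hχ0] at h1; norm_num at h1
      · rw [neg_add_cancel, hχ0] at h2; norm_num at h2
  have hbig : ∑ y ∈ T, (1 - χ y) * (1 - χ (y + x)) = 4 * S.card := by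
    have : ∀ y ∈ T, (1 - χ y) * (1 - χ (y + x)) =
        if χ y = -1 ∧ χ (y + x) = -1 then 4 else 0 := by
      intro y hy
      simp only [hT, Finset.mem_sdiff, mem_univ, true_and, Finset.mem_insert,
        Finset.mem_singleton, not_or] at hy
      obtain ⟨hy0, hyx⟩ := hy
      have hyx0 : y + x ≠ 0 := fun h => hyx (by linear_combination h)
      rcases hdich y hy0 with h1 | h1 <;> rcases hdich (y + x) hyx0 with h2 | h2 <;>
        simp [h1, h2]
    rw [Finset.sum_congr rfl this, ← Finset.sum_filter, hfilter, Finset.sum_const,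
      nsmul_eq_mul]
    ring
  have key : (4 : ℤ) * S.card = (Fintype.card F : ℤ) - 1 := by
    have expand : ∑ y ∈ T, (1 - χ y) * (1 - χ (y + x)) =
        T.card - (∑ y ∈ T, χ y) - (∑ y ∈ T, χ (y + x)) + ∑ y ∈ T, χ y * χ (y + x) := by
      have e : ∀ y ∈ T, (1 - χ y) * (1 - χ (y + x)) =
          1 - χ y - χ (y + x) + χ y * χ (y + x) := fun y _ => by ring
      rw [Finset.sum_congr rfl e, Finset.sum_add_distrib, Finset.sum_sub_distrib,
        Finset.sum_sub_distrib, Finset.sum_const, nsmul_eq_mul, mul_one]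
    rw [← hbig, expand, hsum1, hsum2, hsum3, hTcard]
    ring
  -- conclude
  have h1 : 1 ≤ Fintype.card F := le_trans (by norm_num) hcardF
  have : 4 * S.card = Fintype.card F - 1 := by
    have := key
    omega
  omega
end

section
/- Let F be a finite field with q elements, q odd, and let M = [[α, β], [γ, δ]] be a 2×2 matrix over F with determinant Δ ∈ {1, −1} and trace t = α + δ. If t² − 4Δ ≠ 0, then there exists an invertible 2×2 matrix S over F with det S = Δ such that M = S · [[0, −Δ], [1, t]] · S⁻¹. -/
theorem stmt_4 (F : Type*) [Field F] [Fintype F] [DecidableEq F] (q : ℕ)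
    (hq : Fintype.card F = q) (hodd : Odd q)
    (α β γ δ : F) (M : Matrix (Fin 2) (Fin 2) F) (hM : M = !![α, β; γ, δ])
    (Δ : F) (hΔ : M.det = Δ) (hΔpm : Δ = 1 ∨ Δ = -1)
    (t : F) (ht : t = α + δ)
    (h : t ^ 2 - 4 * Δ ≠ 0) :
    ∃ S : Matrix (Fin 2) (Fin 2) F, IsUnit S ∧ S.det = Δ ∧
      M = S * !![0, -Δ; 1, t] * S⁻¹ := by
  have hcard : Fintype.card F % 2 = 1 := by
    rw [hq]; exact Nat.odd_iff.mp hodd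
  have hchar : ringChar F ≠ 2 := by
    intro hc
    rw [FiniteField.even_card_iff_char_two.mp hc] at hcard
    exact absurd hcard (by norm_num)
  have h2 : (2 : F) ≠ 0 := Ring.two_ne_zero hchar
  have hdet : Δ = α * δ - β * γ := by
    rw [← hΔ, hM, Matrix.det_fin_two_of]
  have hΔ0 : Δ ≠ 0 := by
    rcases hΔpm with h1 | h1 <;> rw [h1] <;> simp
  -- find (x, y) with γ x² + (δ - α) x y - β y² = Δ
  obtain ⟨x, y, hxy⟩ : ∃ x y : F, γ * x ^ 2 + (δ - α) * x * y - β * y ^ 2 = Δ := by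
    by_cases hγ : γ = 0
    · have hαδ : δ - α ≠ 0 := by
        intro h0
        apply h
        have hδα : δ = α := by rw [← sub_eq_zero]; exact h0
        rw [ht, hdet, hγ, hδα]; ring
      refine ⟨(Δ + β) / (δ - α), 1, ?_⟩
      field_simp [hγ]
      rw [hγ]; ring
    · -- complete the square: form equals γ (x + s y)² + c y² with c = -(t²-4Δ)/(4γ)
      set c : F := -(t ^ 2 - 4 * Δ) / (4 * γ) with hc
      have h4γ : (4 : F) * γ ≠ 0 := by
        apply mul_ne_zero _ hγ
        have : (4 : F) = 2 * 2 := by norm_num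
        rw [this]; exact mul_ne_zero h2 h2
      have hcne : c ≠ 0 := div_ne_zero (neg_ne_zero.mpr h) h4γ
      obtain ⟨a, b, hab⟩ := FiniteField.exists_root_sum_quadratic
        (f := Polynomial.C γ * Polynomial.X ^ 2 - Polynomial.C Δ)
        (g := Polynomial.C c * Polynomial.X ^ 2)
        (by
          rw [Polynomial.degree_sub_eq_left_of_degree_lt]
          · exact (Polynomial.degree_C_mul_X_pow 2 hγ)
          · rw [Polynomial.degree_C_mul_X_pow 2 hγ]
            exact lt_of_le_of_lt (Polynomial.degree_C_le) (by norm_num))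
        (Polynomial.degree_C_mul_X_pow 2 hcne) hcard
      simp only [Polynomial.eval_add, Polynomial.eval_sub, Polynomial.eval_mul,
        Polynomial.eval_pow, Polynomial.eval_C, Polynomial.eval_X] at hab
      have key : γ * a ^ 2 + c * b ^ 2 = Δ := by linear_combination hab
      refine ⟨a - (δ - α) / (2 * γ) * b, b, ?_⟩
      have h2γ : (2 : F) * γ ≠ 0 := mul_ne_zero h2 hγ
      have hform : γ * (a - (δ - α) / (2 * γ) * b) ^ 2
          + (δ - α) * (a - (δ - α) / (2 * γ) * b) * b - β * b ^ 2
          = γ * a ^ 2 + c * b ^ 2 := by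
        rw [hc, ht, hdet]
        field_simp
        linear_combination (4*γ*b^2*β - 2*δ*α*b^2 + δ^2*b^2 + α^2*b^2) * inv_mul_cancel₀ (left_ne_zero_of_mul h4γ)
      rw [hform, key]
  -- build the conjugating matrix
  set S : Matrix (Fin 2) (Fin 2) F := !![x, α * x + β * y; y, γ * x + δ * y] with hS
  have hdetS : S.det = Δ := by
    rw [hS, Matrix.det_fin_two_of]
    linear_combination hxy
  have hSunit : IsUnit S := by
    rw [Matrix.isUnit_iff_isUnit_det, hdetS]
    exact isUnit_iff_ne_zero.mpr hΔ0
  refine ⟨S, hSunit, hdetS, ?_⟩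
  have hMS : M * S = S * !![0, -Δ; 1, t] := by
    rw [hM, hS]
    ext i j
    fin_cases i <;> fin_cases j <;>
      simp [Matrix.mul_apply, Fin.sum_univ_two] <;>
      (rw [ht]; first | linear_combination x * hdet | linear_combination y * hdet)
  have hinv : S * S⁻¹ = 1 := Matrix.mul_nonsing_inv S (by rw [hdetS]; exact isUnit_iff_ne_zero.mpr hΔ0)
  calc M = M * (S * S⁻¹) := by rw [hinv, mul_one]
    _ = (M * S) * S⁻¹ := by rw [mul_assoc]
    _ = S * !![0, -Δ; 1, t] * S⁻¹ := by rw [hMS]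
end

section
/- Let F be a finite field with q elements, q odd, and let M = [[α, β], [γ, δ]] be a 2×2 matrix over F with determinant Δ ∈ {1, −1} and trace t = α + δ. If t² − 4Δ = 0 and β ≠ 0, then for every nonzero u ∈ F there exists an invertible 2×2 matrix S over F with det S = Δ such that M = S · [[0, Δ/(β·u²)], [−β·u², t]] · S⁻¹. -/
theorem stmt_5 (F : Type*) [Field F] [Fintype F] [DecidableEq F] (q : ℕ)
    (hq : Fintype.card F = q) (hodd : Odd q)
    (α β γ δ : F) (M : Matrix (Fin 2) (Fin 2) F) (hM : M = !![α, β; γ, δ])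
    (Δ : F) (hΔ : M.det = Δ) (hΔpm : Δ = 1 ∨ Δ = -1)
    (t : F) (ht : t = α + δ)
    (h : t ^ 2 - 4 * Δ = 0) (hβ : β ≠ 0) :
    ∀ u : F, u ≠ 0 →
      ∃ S : Matrix (Fin 2) (Fin 2) F, IsUnit S ∧ S.det = Δ ∧
        M = S * !![0, Δ / (β * u ^ 2); -(β * u ^ 2), t] * S⁻¹ := by
  intro u hu
  have h2 : (2 : F) ≠ 0 := by
    intro h2
    have hchar : ringChar F ∣ 2 := ringChar.dvd (by exact_mod_cast h2)
    have hne : ringChar F ≠ 2 := by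
      intro hc
      have := FiniteField.even_card_iff_char_two.mp hc
      rw [hq] at this
      rw [Nat.odd_iff] at hodd
      omega
    haveI := ringChar.charP F
    have hp : Nat.Prime (ringChar F) := CharP.char_is_prime F (ringChar F)
    exact hne ((Nat.prime_dvd_prime_iff_eq hp Nat.prime_two).mp hchar)
  have hdet : α * δ - β * γ = Δ := by
    rw [hM] at hΔ; simpa [Matrix.det_fin_two_of] using hΔ
  -- choose w with w^2 = Δ * u^2
  obtain ⟨w, hw⟩ : ∃ w : F, w ^ 2 = Δ * u ^ 2 := by
    rcases hΔpm with hd | hd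
    · exact ⟨u, by rw [hd]; ring⟩
    · refine ⟨t * u / 2, ?_⟩
      have ht2 : t ^ 2 = -4 := by rw [hd] at h; linear_combination h
      rw [hd]
      field_simp
      linear_combination ht2
  have hΔ0 : Δ ≠ 0 := by rcases hΔpm with hd | hd <;> rw [hd] <;> norm_num
  have hw0 : w ≠ 0 := by
    intro h0
    rw [h0] at hw
    have hz : Δ * u ^ 2 = 0 := by linear_combination -hw
    rcases mul_eq_zero.mp hz with hc | hc
    · exact hΔ0 hc
    · exact hu (pow_eq_zero_iff (by norm_num) |>.mp hc)
  set S : Matrix (Fin 2) (Fin 2) F :=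
    !![0, -w / u ^ 2; w, -(δ * w) / (β * u ^ 2)] with hS
  have hu2 : u ^ 2 ≠ 0 := pow_ne_zero _ hu
  have hSdet : S.det = Δ := by
    rw [hS]
    simp [Matrix.det_fin_two_of]
    field_simp
    linear_combination hw
  have hSunit : IsUnit S := by
    rw [Matrix.isUnit_iff_isUnit_det, hSdet]
    rcases hΔpm with hd | hd <;> simp [hd]
  refine ⟨S, hSunit, hSdet, ?_⟩
  have hβu : β * u ^ 2 ≠ 0 := mul_ne_zero hβ hu2
  have key : M * S = S * !![0, Δ / (β * u ^ 2); -(β * u ^ 2), t] := by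
    rw [hM, hS]
    ext i j
    fin_cases i <;> fin_cases j <;>
      simp only [Matrix.mul_apply, Fin.sum_univ_two, Matrix.cons_val', Matrix.cons_val_zero,
        Matrix.cons_val_one, Matrix.head_cons, Matrix.head_fin_const, Matrix.empty_val',
        Matrix.cons_val_fin_one, Fin.isValue, Matrix.of_apply, Fin.zero_eta, Fin.mk_one]
    · field_simp
      ring
    · field_simp
      linear_combination (w * β) * ht
    · field_simp
      ring
    · field_simp
      linear_combination δ * ht + hdet
  calc M = M * S * S⁻¹ :=
        (Matrix.mul_nonsing_inv_cancel_right (A := S) M ((Matrix.isUnit_iff_isUnit_det S).mp hSunit)).symm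
    _ = _ := by rw [key]
end

section
/- Let F be a finite field with q elements, q odd, and let M = [[α, β], [γ, δ]] be a 2×2 matrix over F with determinant Δ ∈ {1, −1} and trace t = α + δ. If t² − 4Δ = 0 and γ ≠ 0, then for every nonzero u ∈ F there exists an invertible 2×2 matrix S over F with det S = Δ such that M = S · [[0, −Δ/(γ·u²)], [γ·u², t]] · S⁻¹. -/
theorem stmt_6 (F : Type*) [Field F] [Fintype F] [DecidableEq F] (q : ℕ)
    (hq : Fintype.card F = q) (hodd : Odd q)
    (α β γ δ : F) (M : Matrix (Fin 2) (Fin 2) F) (hM : M = !![α, β; γ, δ])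
    (Δ : F) (hΔ : M.det = Δ) (hΔpm : Δ = 1 ∨ Δ = -1)
    (t : F) (ht : t = α + δ)
    (h : t ^ 2 - 4 * Δ = 0) (hγ : γ ≠ 0) :
    ∀ u : F, u ≠ 0 →
      ∃ S : Matrix (Fin 2) (Fin 2) F, IsUnit S ∧ S.det = Δ ∧
        M = S * !![0, -(Δ / (γ * u ^ 2)); γ * u ^ 2, t] * S⁻¹ := by
  intro u hu
  subst hM ht
  rw [Matrix.det_fin_two_of] at hΔ
  have h2 : (2 : F) ≠ 0 := by
    apply Ring.two_ne_zero
    intro hc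
    have hcard := (FiniteField.even_card_iff_char_two (F := F)).mp hc
    rw [hq] at hcard
    have := Nat.odd_iff.mp hodd
    omega
  have h4 : (4 : F) ≠ 0 := by
    have : (4 : F) = 2 * 2 := by norm_num
    rw [this]; exact mul_ne_zero h2 h2
  have hΔ0 : Δ ≠ 0 := by
    rcases hΔpm with h1 | h1 <;> simp [h1]
  -- choose s with s^2 = Δ * u^2 and s ≠ 0
  obtain ⟨s, hs2, hs0⟩ : ∃ s : F, s ^ 2 = Δ * u ^ 2 ∧ s ≠ 0 := by
    rcases hΔpm with h1 | h1
    · exact ⟨u, by rw [h1, one_mul], hu⟩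
    · refine ⟨(α + δ) / 2 * u, ?_, ?_⟩
      · have hsq : (α + δ) ^ 2 = 4 * Δ := by linear_combination h
        field_simp
        rw [hsq]
        ring
      · have ht0 : α + δ ≠ 0 := by
          intro h0
          rw [h0] at h
          have : (4 : F) * Δ = 0 := by linear_combination -h
          rcases mul_eq_zero.mp this with hh | hh
          · exact h4 hh
          · exact hΔ0 hh
        exact mul_ne_zero (div_ne_zero ht0 h2) hu
  set g : F := γ * u ^ 2 with hg
  have hg0 : g ≠ 0 := mul_ne_zero hγ (pow_ne_zero 2 hu)
  set S : Matrix (Fin 2) (Fin 2) F := !![s, α * s / g; 0, γ * s / g] with hS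
  have hdet : S.det = Δ := by
    rw [hS, Matrix.det_fin_two_of, hg]
    field_simp
    linear_combination γ * hs2
  have hSdu : IsUnit S.det := hdet ▸ hΔ0.isUnit
  have key : !![α, β; γ, δ] * S = S * !![0, -(Δ / g); g, α + δ] := by
    rw [hS]
    ext i j
    fin_cases i <;> fin_cases j <;>
      simp [Matrix.mul_apply, Fin.sum_univ_two, hg] <;> field_simp <;>
      first
        | linear_combination (-(s * γ ^ 2 * u ^ 4)) * hΔ
        | linear_combination -hΔ
        | ring
  exact ⟨S, (Matrix.isUnit_iff_isUnit_det S).mpr hSdu, hdet, by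
    rw [← key, Matrix.mul_nonsing_inv_cancel_right _ _ hSdu]⟩
end

section
/- Let F be a finite field with q elements, q odd, q ≡ 1 (mod 4), and let ε = ±1. Suppose M = [[α, β], [γ, δ]] is a 2×2 matrix over F for which there exists an invertible 2×2 matrix S over F with det S ∈ {1, −1} and M = S · [[0, −1], [1, 2ε]] · S⁻¹. Then the entry γ is a square in F (i.e., γ = y² for some y ∈ F, allowing γ = 0). -/
theorem stmt_7 (F : Type*) [Field F] [Fintype F] [DecidableEq F] (q : ℕ)
    (hq : Fintype.card F = q) (hodd : Odd q) (h4 : q % 4 = 1)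
    (ε : F) (hε : ε = 1 ∨ ε = -1)
    (α β γ δ : F) (M : Matrix (Fin 2) (Fin 2) F) (hM : M = !![α, β; γ, δ])
    (hconj : ∃ S : Matrix (Fin 2) (Fin 2) F, IsUnit S ∧ (S.det = 1 ∨ S.det = -1) ∧
      M = S * !![0, -1; 1, 2 * ε] * S⁻¹) :
    ∃ y : F, γ = y ^ 2 := by
  obtain ⟨S, hS, hdet, hMeq⟩ := hconj
  have hSinv : S⁻¹ = S.det⁻¹ • S.adjugate := by
    rw [Matrix.inv_def, Ring.inverse_eq_inv']
  rw [hM] at hMeq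
  have hγ : γ = (S * !![0, -1; 1, 2 * ε] * S⁻¹) 1 0 := by
    rw [← hMeq]; simp [Matrix.cons_val_one]
  set a := S 0 0 with ha
  set b := S 0 1 with hb
  set c := S 1 0 with hc
  set d := S 1 1 with hd
  have hadj : S.adjugate = !![d, -b; -c, a] := by
    rw [Matrix.eta_fin_two S, Matrix.adjugate_fin_two]; simp; exact ⟨⟨rfl, rfl⟩, rfl, rfl⟩
  have hneg : IsSquare (-1 : F) := by
    rw [FiniteField.isSquare_neg_one_iff, hq, h4]; omega
  obtain ⟨i, hi⟩ := hneg
  rcases hdet with hdet | hdet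
  · rw [hγ, hSinv, hdet, hadj]
    rcases hε with hε | hε <;> subst hε
    · exact ⟨c - d, by simp [Matrix.mul_apply, Fin.sum_univ_two]; ring⟩
    · exact ⟨c + d, by simp [Matrix.mul_apply, Fin.sum_univ_two]; ring⟩
  · rw [hγ, hSinv, hdet, hadj]
    rcases hε with hε | hε <;> subst hε
    · refine ⟨i * (c - d), ?_⟩
      simp [Matrix.mul_apply, Fin.sum_univ_two]
      linear_combination (c - d)^2 * hi
    · refine ⟨i * (c + d), ?_⟩
      simp [Matrix.mul_apply, Fin.sum_univ_two]
      linear_combination (c + d)^2 * hi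
end

section
/- Let F be a finite field with q elements, q odd, q ≡ 1 (mod 4), let ε = ±1, and let ν ∈ F be a nonzero non-square. Then the matrices [[0, −ν⁻¹], [ν, 2ε]] and [[0, −1], [1, 2ε]] are not conjugate within ESL(2,F); that is, there is no invertible 2×2 matrix S over F with det S ∈ {1, −1} such that [[0, −ν⁻¹], [ν, 2ε]] = S · [[0, −1], [1, 2ε]] · S⁻¹. -/
theorem stmt_8 (F : Type*) [Field F] [Fintype F] [DecidableEq F] (q : ℕ)
    (hq : Fintype.card F = q) (hodd : Odd q) (h4 : q % 4 = 1)
    (ε : F) (hε : ε = 1 ∨ ε = -1)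
    (ν : F) (hν : ν ≠ 0) (hνns : ¬ ∃ y : F, ν = y ^ 2) :
    ¬ ∃ S : Matrix (Fin 2) (Fin 2) F, IsUnit S ∧ (S.det = 1 ∨ S.det = -1) ∧
      !![0, -ν⁻¹; ν, 2 * ε] = S * !![0, -1; 1, 2 * ε] * S⁻¹ := by
  rintro ⟨S, hS, hdet, hconj⟩
  have hdS : IsUnit S.det := (Matrix.isUnit_iff_isUnit_det S).mp hS
  have hAS : !![0, -ν⁻¹; ν, 2 * ε] * S = S * !![0, -1; 1, 2 * ε] := by
    rw [hconj, Matrix.mul_assoc, Matrix.mul_assoc, Matrix.nonsing_inv_mul S hdS,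
      Matrix.mul_one]
  have e1 := congrFun (congrFun hAS 0) 0
  have e3 := congrFun (congrFun hAS 1) 0
  simp [Matrix.mul_apply, Fin.sum_univ_two] at e1 e3
  -- e1 : -(ν⁻¹ * S 1 0) = S 0 1 ; e3 : ν * S 0 0 + 2 * ε * S 1 0 = S 1 1
  have hr : S 1 0 = -ν * S 0 1 := by
    rw [← e1]; field_simp
  have hε2 : ε ^ 2 = 1 := by rcases hε with h | h <;> rw [h] <;> ring
  have hkey : S.det = ν * (S 0 0 - ε * S 0 1) ^ 2 := by
    rw [Matrix.det_fin_two, ← e3, hr]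
    linear_combination (-ν*(S 0 1)^2) * hε2
  -- -1 is a square
  have hns : IsSquare (-1 : F) := by
    rw [FiniteField.isSquare_neg_one_iff, hq, h4]
    norm_num
  have ht : S 0 0 - ε * S 0 1 ≠ 0 := by
    intro h
    rcases hdet with hd | hd <;> rw [hd, h] at hkey <;> simp at hkey <;> norm_num at hkey
  apply hνns
  rcases hdet with hd | hd
  · exact ⟨(S 0 0 - ε * S 0 1)⁻¹, by
      rw [hd] at hkey
      field_simp
      linear_combination -hkey ⟩
  · obtain ⟨i, hi⟩ := hns
    exact ⟨i * (S 0 0 - ε * S 0 1)⁻¹, by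
      rw [hd] at hkey
      field_simp
      linear_combination -hkey + hi⟩
end

section
/- Let F be a finite field with q elements, q odd, q ≡ 3 (mod 4). Let M be a 2×2 matrix over F with determinant Δ ∈ {1, −1} and trace t, and suppose M ≠ I and M ≠ −I (where I is the identity matrix). Then there exists an invertible 2×2 matrix S over F with det S ∈ {1, −1} such that M = S · [[0, −Δ], [1, t]] · S⁻¹. -/
-- square-class lemma
lemma sq_class (F : Type*) [Field F] [Fintype F] [DecidableEq F]
    (hneg : ¬ IsSquare (-1 : F)) (D : F) (hD : D ≠ 0) :
    ∃ ε l : F, l ≠ 0 ∧ (ε = 1 ∨ ε = -1) ∧ D = ε * l ^ 2 := by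
  by_cases h : IsSquare D
  · obtain ⟨r, hr⟩ := h
    refine ⟨1, r, ?_, Or.inl rfl, by rw [hr]; ring⟩
    rintro rfl; simp at hr; exact hD hr
  · have h1 : quadraticChar F D = -1 := quadraticChar_neg_one_iff_not_isSquare.mpr h
    have h2 : quadraticChar F (-1) = -1 := quadraticChar_neg_one_iff_not_isSquare.mpr hneg
    have h3 : quadraticChar F (-D) = 1 := by
      have := map_mul (quadraticChar F) (-1) D
      rw [h1, h2, neg_one_mul] at this
      rw [this]; ring
    have h4 : IsSquare (-D) := (quadraticChar_one_iff_isSquare (neg_ne_zero.mpr hD)).mp h3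
    obtain ⟨r, hr⟩ := h4
    refine ⟨-1, r, ?_, Or.inr rfl, ?_⟩
    · rintro rfl; simp at hr; simp [hr] at hD
    · have : D = -(r * r) := by rw [← hr]; ring
      rw [this]; ring

lemma conj_of (F : Type*) [Field F] [Fintype F] [DecidableEq F]
    (hneg : ¬ IsSquare (-1 : F)) (M C S : Matrix (Fin 2) (Fin 2) F)
    (hd : S.det ≠ 0) (hMS : M * S = S * C) :
    ∃ S' : Matrix (Fin 2) (Fin 2) F, IsUnit S' ∧ (S'.det = 1 ∨ S'.det = -1) ∧
      M = S' * C * S'⁻¹ := by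
  obtain ⟨ε, l, hl, hε, hDE⟩ := sq_class F hneg S.det hd
  have hdet : (l⁻¹ • S).det = ε := by
    rw [Matrix.det_smul, hDE]
    field_simp
    rw [Fintype.card_fin, one_div, inv_pow, mul_inv_cancel₀ (pow_ne_zero 2 hl), one_mul]
  have hu : IsUnit (l⁻¹ • S).det := by
    rw [hdet]
    rcases hε with h | h <;> simp [h]
  have hMS' : M * (l⁻¹ • S) = (l⁻¹ • S) * C := by
    rw [mul_smul_comm, hMS, smul_mul_assoc]
  refine ⟨l⁻¹ • S, (Matrix.isUnit_iff_isUnit_det _).mpr hu, by rw [hdet]; exact hε, ?_⟩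
  rw [← hMS', mul_assoc, Matrix.mul_nonsing_inv _ hu, mul_one]

theorem stmt_9 (F : Type*) [Field F] [Fintype F] [DecidableEq F] (q : ℕ)
    (hq : Fintype.card F = q) (hodd : Odd q) (h4 : q % 4 = 3)
    (M : Matrix (Fin 2) (Fin 2) F)
    (Δ : F) (hΔ : M.det = Δ) (hΔpm : Δ = 1 ∨ Δ = -1)
    (t : F) (ht : M.trace = t)
    (hM1 : M ≠ 1) (hM2 : M ≠ -1) :
    ∃ S : Matrix (Fin 2) (Fin 2) F, IsUnit S ∧ (S.det = 1 ∨ S.det = -1) ∧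
      M = S * !![0, -Δ; 1, t] * S⁻¹ := by
  subst hq
  have hneg : ¬ IsSquare (-1 : F) := by
    simp [FiniteField.isSquare_neg_one_iff, h4]
  set a := M 0 0 with ha
  set b := M 0 1 with hb
  set c := M 1 0 with hc
  set d := M 1 1 with hd
  have hM : M = !![a, b; c, d] := Matrix.eta_fin_two M
  have hdet : a * d - b * c = Δ := by
    rw [← hΔ, Matrix.det_fin_two]
  have htr : a + d = t := by
    rw [← ht, Matrix.trace_fin_two]
  by_cases hc0 : c ≠ 0
  · apply conj_of F hneg M _ !![1, a; 0, c]
    · rw [Matrix.det_fin_two_of]; simpa using hc0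
    · rw [hM, Matrix.mul_fin_two, Matrix.mul_fin_two, ← hdet, ← htr]
      ext i j
      fin_cases i <;> fin_cases j <;> simp <;> ring
  · push_neg at hc0
    by_cases hb0 : b ≠ 0
    · apply conj_of F hneg M _ !![0, b; 1, d]
      · rw [Matrix.det_fin_two_of]; simpa using hb0
      · rw [hM, Matrix.mul_fin_two, Matrix.mul_fin_two, ← hdet, ← htr]
        ext i j
        fin_cases i <;> fin_cases j <;> simp <;> ring
    · push_neg at hb0
      have had : a ≠ d := by
        intro h
        have ha2 : a * a = Δ := by rw [← hdet, h, hb0]; ring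
        rcases hΔpm with hδ | hδ
        · rw [hδ] at ha2
          have : (a - 1) * (a + 1) = 0 := by ring_nf; linear_combination ha2
          rcases mul_eq_zero.mp this with h1 | h1
          · apply hM1
            have : a = 1 := by linear_combination h1
            rw [hM, hb0, hc0, ← h, this]
            ext i j; fin_cases i <;> fin_cases j <;> simp
          · apply hM2
            have : a = -1 := by linear_combination h1
            rw [hM, hb0, hc0, ← h, this]
            ext i j; fin_cases i <;> fin_cases j <;> simp
        · exact hneg ⟨a, by rw [← hδ]; exact ha2.symm⟩
      apply conj_of F hneg M _ !![1, a; 1, d]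
      · rw [Matrix.det_fin_two_of]
        intro h; apply had; linear_combination -h
      · rw [hM, hb0, hc0, Matrix.mul_fin_two, Matrix.mul_fin_two, ← hdet, ← htr, hb0, hc0]
        ext i j
        fin_cases i <;> fin_cases j <;> simp <;> ring
end

section
/- Let F be a finite field with q elements, q odd, q ≡ 1 (mod 4). Let M = [[α, β], [γ, δ]] be a 2×2 matrix over F with determinant Δ ∈ {1, −1} and trace t satisfying t² − 4Δ = 0, and suppose β is a nonzero square in F or γ is a nonzero square in F. Then there exists an invertible 2×2 matrix S over F with det S ∈ {1, −1} such that M = S · [[0, −Δ], [1, t]] · S⁻¹. -/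
theorem stmt_10 (F : Type*) [Field F] [Fintype F] [DecidableEq F] (q : ℕ)
    (hq : Fintype.card F = q) (hodd : Odd q) (h4 : q % 4 = 1)
    (α β γ δ : F) (M : Matrix (Fin 2) (Fin 2) F) (hM : M = !![α, β; γ, δ])
    (Δ : F) (hΔ : M.det = Δ) (hΔpm : Δ = 1 ∨ Δ = -1)
    (t : F) (ht : t = α + δ)
    (h : t ^ 2 - 4 * Δ = 0)
    (hsq : (β ≠ 0 ∧ ∃ y : F, β = y ^ 2) ∨ (γ ≠ 0 ∧ ∃ y : F, γ = y ^ 2)) :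
    ∃ S : Matrix (Fin 2) (Fin 2) F, IsUnit S ∧ (S.det = 1 ∨ S.det = -1) ∧
      M = S * !![0, -Δ; 1, t] * S⁻¹ := by
  subst hM ht
  have hΔ' : α * δ - β * γ = Δ := by
    rw [← hΔ]; simp [Matrix.det_fin_two_of]
  have hneg : IsSquare (-1 : F) := by
    rw [FiniteField.isSquare_neg_one_iff, hq]
    omega
  obtain ⟨w, hw⟩ := hneg
  have hw0 : w ≠ 0 := by
    intro h0
    rw [h0, mul_zero] at hw
    exact one_ne_zero (neg_eq_zero.mp hw)
  rcases hsq with ⟨hβ, y, hy⟩ | ⟨hγ, y, hy⟩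
  · have hy0 : y ≠ 0 := by
      intro h0; apply hβ; rw [hy, h0]; ring
    obtain ⟨x, hwyx⟩ : ∃ x : F, w * y * x = 1 :=
      ⟨(w * y)⁻¹, mul_inv_cancel₀ (mul_ne_zero hw0 hy0)⟩
    have hdet : Matrix.det !![0, β * x; x, δ * x] = 1 := by
      simp only [Matrix.det_fin_two_of, hy]
      linear_combination y ^ 2 * x ^ 2 * hw + (w * y * x + 1) * hwyx
    have hu : IsUnit (Matrix.det !![0, β * x; x, δ * x]) := by
      rw [hdet]; exact isUnit_one
    refine ⟨!![0, β * x; x, δ * x], (Matrix.isUnit_iff_isUnit_det _).mpr hu,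
      Or.inl hdet, ?_⟩
    have hmul : !![α, β; γ, δ] * !![0, β * x; x, δ * x] =
        !![0, β * x; x, δ * x] * !![0, -Δ; 1, α + δ] := by
      ext i j
      fin_cases i <;> fin_cases j <;>
        simp [Matrix.mul_apply, Fin.sum_univ_two] <;>
        first
        | ring1
        | linear_combination (-x) * hΔ'
    calc !![α, β; γ, δ]
        = !![α, β; γ, δ] * (!![0, β * x; x, δ * x] * !![0, β * x; x, δ * x]⁻¹) := by
          rw [Matrix.mul_nonsing_inv _ hu, mul_one]
      _ = !![0, β * x; x, δ * x] * !![0, -Δ; 1, α + δ] * !![0, β * x; x, δ * x]⁻¹ := by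
          rw [← mul_assoc, hmul]
  · have hy0 : y ≠ 0 := by
      intro h0; apply hγ; rw [hy, h0]; ring
    obtain ⟨x, hyx⟩ : ∃ x : F, y * x = 1 := ⟨y⁻¹, mul_inv_cancel₀ hy0⟩
    have hdet : Matrix.det !![x, α * x; 0, γ * x] = 1 := by
      simp only [Matrix.det_fin_two_of, hy]
      linear_combination (y * x + 1) * hyx
    have hu : IsUnit (Matrix.det !![x, α * x; 0, γ * x]) := by
      rw [hdet]; exact isUnit_one
    refine ⟨!![x, α * x; 0, γ * x], (Matrix.isUnit_iff_isUnit_det _).mpr hu,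
      Or.inl hdet, ?_⟩
    have hmul : !![α, β; γ, δ] * !![x, α * x; 0, γ * x] =
        !![x, α * x; 0, γ * x] * !![0, -Δ; 1, α + δ] := by
      ext i j
      fin_cases i <;> fin_cases j <;>
        simp [Matrix.mul_apply, Fin.sum_univ_two] <;>
        first
        | ring1
        | linear_combination (-x) * hΔ'
    calc !![α, β; γ, δ]
        = !![α, β; γ, δ] * (!![x, α * x; 0, γ * x] * !![x, α * x; 0, γ * x]⁻¹) := by
          rw [Matrix.mul_nonsing_inv _ hu, mul_one]
      _ = !![x, α * x; 0, γ * x] * !![0, -Δ; 1, α + δ] * !![x, α * x; 0, γ * x]⁻¹ := by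
          rw [← mul_assoc, hmul]
end

section
/- Let F be a finite field with q elements, q odd, q ≡ 1 (mod 4), and let ν ∈ F be a fixed nonzero non-square. Let M = [[α, β], [γ, δ]] be a 2×2 matrix over F with determinant Δ ∈ {1, −1} and trace t satisfying t² − 4Δ = 0, and suppose β is a nonzero non-square in F or γ is a nonzero non-square in F. Then there exists an invertible 2×2 matrix S over F with det S ∈ {1, −1} such that M = S · [[0, −t²/(4ν)], [ν, t]] · S⁻¹. -/
private lemma aux_sq {F : Type*} [Field F] [Fintype F] [DecidableEq F]
    (a b : F) (ha : a ≠ 0) (hb : b ≠ 0)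
    (hans : ¬ ∃ y : F, a = y ^ 2) (hbns : ¬ ∃ y : F, b = y ^ 2) :
    ∃ s : F, s ≠ 0 ∧ a = s ^ 2 * b := by
  have ha' : ¬ IsSquare a := fun ⟨r, hr⟩ => hans ⟨r, by rw [hr, sq]⟩
  have hb' : ¬ IsSquare b := fun ⟨r, hr⟩ => hbns ⟨r, by rw [hr, sq]⟩
  have hca : quadraticChar F a = -1 := quadraticChar_neg_one_iff_not_isSquare.mpr ha'
  have hcb : quadraticChar F b = -1 := quadraticChar_neg_one_iff_not_isSquare.mpr hb'
  have hbinv : quadraticChar F b⁻¹ = -1 := by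
    have h1 : quadraticChar F b * quadraticChar F b⁻¹ = 1 := by
      rw [← map_mul, mul_inv_cancel₀ hb, map_one]
    rcases quadraticChar_dichotomy (a := b⁻¹) (inv_ne_zero hb) with h | h
    · rw [h, mul_one] at h1; rw [hcb] at h1; omega
    · exact h
  have hmul : quadraticChar F (a * b⁻¹) = 1 := by
    rw [map_mul, hca, hbinv]; ring
  have hab0 : a * b⁻¹ ≠ 0 := mul_ne_zero ha (inv_ne_zero hb)
  obtain ⟨r, hr⟩ := (quadraticChar_one_iff_isSquare hab0).mp hmul
  refine ⟨r, ?_, ?_⟩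
  · rintro rfl; rw [mul_zero] at hr; exact hab0 hr
  · field_simp at hr ⊢
    rw [hr]

theorem stmt_11 (F : Type*) [Field F] [Fintype F] [DecidableEq F] (q : ℕ)
    (hq : Fintype.card F = q) (hodd : Odd q) (h4 : q % 4 = 1)
    (ν : F) (hν : ν ≠ 0) (hνns : ¬ ∃ y : F, ν = y ^ 2)
    (α β γ δ : F) (M : Matrix (Fin 2) (Fin 2) F) (hM : M = !![α, β; γ, δ])
    (Δ : F) (hΔ : M.det = Δ) (hΔpm : Δ = 1 ∨ Δ = -1)
    (t : F) (ht : t = α + δ)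
    (h : t ^ 2 - 4 * Δ = 0)
    (hns : (β ≠ 0 ∧ ¬ ∃ y : F, β = y ^ 2) ∨ (γ ≠ 0 ∧ ¬ ∃ y : F, γ = y ^ 2)) :
    ∃ S : Matrix (Fin 2) (Fin 2) F, IsUnit S ∧ (S.det = 1 ∨ S.det = -1) ∧
      M = S * !![0, -(t ^ 2 / (4 * ν)); ν, t] * S⁻¹ := by
  have hchar : ringChar F ≠ 2 := by
    intro hc
    have := FiniteField.even_card_of_char_two hc
    rw [hq] at this
    omega
  have h2 : (2 : F) ≠ 0 := Ring.two_ne_zero hchar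
  have h4F : (4 : F) ≠ 0 := by
    intro hc
    apply h2
    have : (2 : F) * 2 = 0 := by rw [← hc]; norm_num
    rcases mul_eq_zero.mp this with h' | h' <;> exact h'
  have hdet : α * δ - β * γ = Δ := by
    rw [← hΔ, hM, Matrix.det_fin_two_of]
  subst ht
  rcases hns with ⟨hβ0, hβns⟩ | ⟨hγ0, hγns⟩
  · obtain ⟨s, hs0, hsq⟩ := aux_sq β ν hβ0 hν hβns hνns
    subst hsq
    have h' : (α + δ) ^ 2 - 4 * (α * δ - s ^ 2 * ν * γ) = 0 := by
      linear_combination h - 4 * hdet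
    refine ⟨!![0, s; s⁻¹, δ / (s * ν)], ?_, ?_, ?_⟩
    · rw [Matrix.isUnit_iff_isUnit_det, Matrix.det_fin_two_of]
      simp only [isUnit_iff_ne_zero]
      field_simp
      simp [hs0, hν]
    · right
      rw [Matrix.det_fin_two_of]
      field_simp
      ring
    · have hdetS : IsUnit (!![(0 : F), s; s⁻¹, δ / (s * ν)]).det := by
        rw [Matrix.det_fin_two_of]
        simp only [isUnit_iff_ne_zero]
        field_simp
        simp [hs0, hν]
      have key : M * !![0, s; s⁻¹, δ / (s * ν)] =
          !![0, s; s⁻¹, δ / (s * ν)] * !![0, -((α + δ) ^ 2 / (4 * ν)); ν, α + δ] := by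
        rw [hM]
        ext i j
        fin_cases i <;> fin_cases j <;>
          simp [Matrix.mul_apply, Fin.sum_univ_two] <;>
          field_simp
        all_goals (try ring)
        all_goals linear_combination h'
      calc M = M * !![0, s; s⁻¹, δ / (s * ν)] * !![0, s; s⁻¹, δ / (s * ν)]⁻¹ := by
              rw [Matrix.mul_nonsing_inv_cancel_right _ _ hdetS]
        _ = _ := by rw [key]
  · obtain ⟨s, hs0, hsq⟩ := aux_sq γ ν hγ0 hν hγns hνns
    subst hsq
    have h' : (α + δ) ^ 2 - 4 * (α * δ - β * (s ^ 2 * ν)) = 0 := by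
      linear_combination h - 4 * hdet
    refine ⟨!![s⁻¹, α / (s * ν); 0, s], ?_, ?_, ?_⟩
    · rw [Matrix.isUnit_iff_isUnit_det, Matrix.det_fin_two_of]
      simp only [isUnit_iff_ne_zero]
      field_simp
      simp [hs0, hν]
    · left
      rw [Matrix.det_fin_two_of]
      field_simp
      ring
    · have hdetS : IsUnit (!![s⁻¹, α / (s * ν); (0 : F), s]).det := by
        rw [Matrix.det_fin_two_of]
        simp only [isUnit_iff_ne_zero]
        field_simp
        simp [hs0, hν]
      have key : M * !![s⁻¹, α / (s * ν); 0, s] =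
          !![s⁻¹, α / (s * ν); 0, s] * !![0, -((α + δ) ^ 2 / (4 * ν)); ν, α + δ] := by
        rw [hM]
        ext i j
        fin_cases i <;> fin_cases j <;>
          simp [Matrix.mul_apply, Fin.sum_univ_two] <;>
          field_simp
        all_goals (try ring)
        all_goals linear_combination h'
      calc M = M * !![s⁻¹, α / (s * ν); 0, s] * !![s⁻¹, α / (s * ν); 0, s]⁻¹ := by
              rw [Matrix.mul_nonsing_inv_cancel_right _ _ hdetS]
        _ = _ := by rw [key]
end

section
/- Let F be a finite field with q elements, q odd. Let M be a 2×2 matrix over F with determinant 1 and trace t, and suppose t ≠ 2 and t ≠ −2. Then there exists a 2×2 matrix S over F with det S = 1 such that M = S · [[0, −1], [1, t]] · S⁻¹; that is, M is conjugate within SL(2,F) to [[0, −1], [1, t]]. -/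
open Polynomial in
lemma quadform_represents_one (F : Type*) [Field F] [Fintype F] [DecidableEq F]
    (hcard : Fintype.card F % 2 = 1)
    (cc e bb : F) (hdisc : e ^ 2 + 4 * cc * bb ≠ 0) :
    ∃ x y : F, cc * x ^ 2 + e * x * y - bb * y ^ 2 = 1 := by
  have h2 : (2 : F) ≠ 0 := by
    apply Ring.two_ne_zero
    intro hchar
    rw [FiniteField.even_card_iff_char_two.mp hchar] at hcard
    exact absurd hcard (by norm_num)
  by_cases hc : cc = 0
  · subst hc
    have he : e ≠ 0 := by
      intro h; apply hdisc; rw [h]; ring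
    refine ⟨(1 + bb) / e, 1, ?_⟩
    field_simp
    ring
  · set β : F := -(e ^ 2 + 4 * cc * bb) / (4 * cc) with hβ
    have h4 : (4 : F) ≠ 0 := by
      intro h
      apply h2
      have : (2 : F) * 2 = 0 := by rw [show (2:F)*2 = 4 by norm_num, h]
      rcases mul_eq_zero.mp this with h' | h' <;> exact h'
    have h4c : (4 : F) * cc ≠ 0 := mul_ne_zero h4 hc
    have hβ0 : β ≠ 0 := div_ne_zero (neg_ne_zero.mpr hdisc) h4c
    obtain ⟨a, b, hab⟩ := FiniteField.exists_root_sum_quadratic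
      (f := C cc * X ^ 2) (g := C β * X ^ 2 - C 1)
      (by rw [degree_C_mul hc, degree_X_pow]; rfl)
      (by
        rw [sub_eq_add_neg, degree_add_eq_left_of_degree_lt, degree_C_mul hβ0, degree_X_pow]; rfl
        rw [degree_C_mul hβ0, degree_X_pow, degree_neg]
        exact lt_of_le_of_lt (degree_C_le) (by norm_num))
      hcard
    simp only [eval_add, eval_mul, eval_sub, eval_C, eval_pow, eval_X, eval_one] at hab
    have hab2 : 4 * cc ^ 2 * a ^ 2 - (e ^ 2 + 4 * cc * bb) * b ^ 2 - 4 * cc = 0 := by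
      have h1 : β * (4 * cc) = -(e ^ 2 + 4 * cc * bb) := div_mul_cancel₀ _ h4c
      linear_combination (4 * cc) * hab - b ^ 2 * h1
    have h2c : (2 : F) * cc ≠ 0 := mul_ne_zero h2 hc
    refine ⟨a - e * b / (2 * cc), b, ?_⟩
    field_simp
    linear_combination hab2

theorem stmt_12 (F : Type*) [Field F] [Fintype F] [DecidableEq F] (q : ℕ)
    (hq : Fintype.card F = q) (hodd : Odd q)
    (M : Matrix (Fin 2) (Fin 2) F) (hdet : M.det = 1)
    (t : F) (ht : M.trace = t) (ht2 : t ≠ 2) (ht2' : t ≠ -2) :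
    ∃ S : Matrix (Fin 2) (Fin 2) F, S.det = 1 ∧
      M = S * !![0, -1; 1, t] * S⁻¹ := by
  have hcard : Fintype.card F % 2 = 1 := by
    rw [hq]; exact Nat.odd_iff.mp hodd
  set a := M 0 0 with ha; set b := M 0 1 with hb
  set c := M 1 0 with hc; set d := M 1 1 with hd
  have hdet' : a * d - b * c = 1 := by rw [← Matrix.det_fin_two M]; exact hdet
  have htr : a + d = t := by rw [← Matrix.trace_fin_two M]; exact ht
  have hdisc : (d - a) ^ 2 + 4 * c * b ≠ 0 := by
    have h1 : t - 2 ≠ 0 := sub_ne_zero.mpr ht2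
    have h2 : t + 2 ≠ 0 := fun h => ht2' (by linear_combination h)
    have heq : (d - a) ^ 2 + 4 * c * b = (t - 2) * (t + 2) := by
      linear_combination (a + d + t) * htr - 4 * hdet'
    rw [heq]
    exact mul_ne_zero h1 h2
  obtain ⟨x, y, hxy⟩ := quadform_represents_one F hcard c (d - a) b hdisc
  set S : Matrix (Fin 2) (Fin 2) F := !![x, a * x + b * y; y, c * x + d * y] with hS
  have hdetS : S.det = 1 := by
    rw [hS, Matrix.det_fin_two_of]
    linear_combination hxy
  refine ⟨S, hdetS, ?_⟩
  have hU : IsUnit S.det := by rw [hdetS]; exact isUnit_one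
  have hMS : M * S = S * !![0, -1; 1, t] := by
    ext i j
    fin_cases i <;> fin_cases j <;>
      simp [hS, Matrix.mul_apply, Fin.sum_univ_two, ← ha, ← hb, ← hc, ← hd]
    · linear_combination (a * x + b * y) * htr - x * hdet'
    · linear_combination (c * x + d * y) * htr - y * hdet'
  calc M = M * S * S⁻¹ := (Matrix.mul_nonsing_inv_cancel_right S M hU).symm
    _ = S * !![0, -1; 1, t] * S⁻¹ := by rw [hMS]
end

section
/- Let F be a finite field with q elements, q odd, and let ε = ±1. Let M = [[α, β], [γ, δ]] be a 2×2 matrix over F with determinant 1 and trace 2ε, and suppose −β is a nonzero square in F or γ is a nonzero square in F. Then there exists a 2×2 matrix S over F with det S = 1 such that M = S · [[0, −1], [1, 2ε]] · S⁻¹. -/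
lemma conj_of_mul_eq {F : Type*} [Field F] [DecidableEq F]
    (M S T : Matrix (Fin 2) (Fin 2) F) (hS : S.det = 1) (h : M * S = S * T) :
    M = S * T * S⁻¹ := by
  have hSinv : S * S⁻¹ = 1 := Matrix.mul_nonsing_inv _ (by simp [hS])
  calc M = M * (S * S⁻¹) := by rw [hSinv, mul_one]
    _ = (M * S) * S⁻¹ := by rw [mul_assoc]
    _ = S * T * S⁻¹ := by rw [h]

theorem stmt_13 (F : Type*) [Field F] [Fintype F] [DecidableEq F] (q : ℕ)
    (hq : Fintype.card F = q) (hodd : Odd q)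
    (ε : F) (hε : ε = 1 ∨ ε = -1)
    (α β γ δ : F) (M : Matrix (Fin 2) (Fin 2) F) (hM : M = !![α, β; γ, δ])
    (hdet : M.det = 1) (htr : α + δ = 2 * ε)
    (hsq : (-β ≠ 0 ∧ ∃ y : F, -β = y ^ 2) ∨ (γ ≠ 0 ∧ ∃ y : F, γ = y ^ 2)) :
    ∃ S : Matrix (Fin 2) (Fin 2) F, S.det = 1 ∧
      M = S * !![0, -1; 1, 2 * ε] * S⁻¹ := by
  have hdet' : α * δ - β * γ = 1 := by
    simpa [hM, Matrix.det_fin_two_of] using hdet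
  rcases hsq with ⟨hb, y, hy⟩ | ⟨hg, y, hy⟩
  · have hy0 : y ≠ 0 := by
      rintro rfl; exact hb (by simpa using hy)
    have hSdet : (!![0, β/y; 1/y, δ/y] : Matrix (Fin 2) (Fin 2) F).det = 1 := by
      simp only [Matrix.det_fin_two_of]
      field_simp
      linear_combination hy
    refine ⟨!![0, β/y; 1/y, δ/y], hSdet, conj_of_mul_eq _ _ _ hSdet ?_⟩
    subst hM
    ext i j
    fin_cases i <;> fin_cases j <;>
      simp [Matrix.mul_apply, Fin.sum_univ_two] <;>
      field_simp <;>
      first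
        | linear_combination β * htr
        | linear_combination δ * htr - hdet'
  · have hy0 : y ≠ 0 := by
      rintro rfl; exact hg (by simpa using hy)
    have hSdet : (!![1/y, α/y; 0, γ/y] : Matrix (Fin 2) (Fin 2) F).det = 1 := by
      simp only [Matrix.det_fin_two_of]
      field_simp
      linear_combination hy
    refine ⟨!![1/y, α/y; 0, γ/y], hSdet, conj_of_mul_eq _ _ _ hSdet ?_⟩
    subst hM
    ext i j
    fin_cases i <;> fin_cases j <;>
      simp [Matrix.mul_apply, Fin.sum_univ_two] <;>
      field_simp <;>
      first
        | linear_combination γ * htr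
        | linear_combination α * htr + hdet'
        | linear_combination α * htr - hdet'
        | linear_combination htr
end
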